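/- arXiv:2002.08120 — 2 statements merged into one kernel-verified Lean document; each statement's English description precedes it below -/
import Mathlib

section
/- Let n be a positive integer, n′ := rad(n), and h := n/n′. For every integer t, the Ramanujan sums satisfy c_n(h·t) = h · c_{n′}(t). -/
/-
The map `z ↦ z ^ h` sends the primitive `n`-th roots of unity onto the primitive `rad n`-th
roots. Conversely every `h`-th root `z` of a primitive `rad n`-th root `w` is a primitive
`n`-th root: for each prime `p ∣ n` we have `p ∣ rad n`, so `z ^ (n / p) = w ^ (rad n / p) ≠ 1`.
Hence each fibre consists of all `h` complex `h`-th roots of `w`, and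
`c_n(h t) = ∑ (z ^ h) ^ t = h · ∑ w ^ t = h · c_{rad n}(t)`.
-/

open Matrix Polynomial BigOperators

/-- The Frobenius norm of a square complex matrix. -/
noncomputable def frobNorm {k : ℕ} (A : Matrix (Fin k) (Fin k) ℂ) : ℝ :=
  Real.sqrt (∑ i, ∑ j, ‖A i j‖ ^ 2)

/-- The condition number `Cond(A) = ‖A‖ ‖A⁻¹‖` (Frobenius norm). -/
noncomputable def condNum {k : ℕ} (A : Matrix (Fin k) (Fin k) ℂ) : ℝ :=
  frobNorm A * frobNorm A⁻¹

/-- The Vandermonde matrix with (i,j) entry `ζ i ^ j` (0-indexed). -/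
def vand {m : ℕ} (ζ : Fin m → ℂ) : Matrix (Fin m) (Fin m) ℂ :=
  Matrix.of fun i j => ζ i ^ (j : ℕ)

/-- The radical of `n`: the product of the distinct prime factors of `n`. -/
def rad (n : ℕ) : ℕ := ∏ p ∈ n.primeFactors, p

/-- The Ramanujan sum `c_n(t)`: the sum of the `t`-th powers of the
primitive `n`-th roots of unity in `ℂ`. -/
noncomputable def ram (n : ℕ) (t : ℤ) : ℂ := ∑ z ∈ primitiveRoots n ℂ, z ^ t

lemma rad_dvd (n : ℕ) : rad n ∣ n := Nat.prod_primeFactors_dvd n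

lemma primeFactors_rad (n : ℕ) : (rad n).primeFactors = n.primeFactors :=
  Nat.primeFactors_prod fun _ => Nat.prime_of_mem_primeFactors

lemma IsPrimitiveRoot.of_pow_of_primeFactors_subset {M : Type*} [CommMonoid M] {z : M}
    {h m : ℕ} (hpos : 0 < h * m) (hsub : (h * m).primeFactors ⊆ m.primeFactors)
    (hz : IsPrimitiveRoot (z ^ h) m) : IsPrimitiveRoot z (h * m) := by
  rw [IsPrimitiveRoot.iff_orderOf]
  refine orderOf_eq_of_pow_and_pow_div_prime hpos (by rw [pow_mul, hz.pow_eq_one]) ?_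
  intro p hp hpn
  have hpm : p ∣ m :=
    Nat.dvd_of_mem_primeFactors <| hsub <| Nat.mem_primeFactors.2 ⟨hp, hpn, hpos.ne'⟩
  have hm : 0 < m := Nat.pos_of_mul_pos_left hpos
  rw [Nat.mul_div_assoc h hpm, pow_mul]
  exact hz.pow_ne_one_of_pos_of_lt (Nat.div_pos (Nat.le_of_dvd hm hpm) hp.pos).ne'
    (Nat.div_lt_self hm hp.one_lt)

lemma Complex.card_nthRootsFinset {h : ℕ} (hh : 0 < h) {w : ℂ} (hw : w ≠ 0) :
    (nthRootsFinset h w).card = h := by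
  classical
  have hζ := Complex.isPrimitiveRoot_exp h hh.ne'
  rw [nthRootsFinset_def, Multiset.toFinset_card_of_nodup (hζ.nthRoots_nodup hw),
    hζ.card_nthRoots w, if_pos (IsAlgClosed.exists_pow_nat_eq w hh)]

lemma card_primitiveRoots_filter_pow_eq {h m : ℕ} (hpos : 0 < h * m)
    (hsub : (h * m).primeFactors ⊆ m.primeFactors) {w : ℂ} (hw : IsPrimitiveRoot w m) :
    ((primitiveRoots (h * m) ℂ).filter (fun z => z ^ h = w)).card = h := by
  have hh : 0 < h := Nat.pos_of_mul_pos_right hpos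
  have hfiber : (primitiveRoots (h * m) ℂ).filter (fun z => z ^ h = w) = nthRootsFinset h w := by
    ext z
    rw [Finset.mem_filter, mem_nthRootsFinset hh, mem_primitiveRoots hpos, and_iff_right_iff_imp]
    rintro rfl
    exact IsPrimitiveRoot.of_pow_of_primeFactors_subset hpos hsub hw
  rw [hfiber, Complex.card_nthRootsFinset hh (hw.ne_zero (Nat.pos_of_mul_pos_left hpos).ne')]

lemma ram_mul_of_primeFactors_subset {h m : ℕ} (hpos : 0 < h * m)
    (hsub : (h * m).primeFactors ⊆ m.primeFactors) (t : ℤ) :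
    ram (h * m) (h * t) = h * ram m t := by
  have hm : 0 < m := Nat.pos_of_mul_pos_left hpos
  have hmaps : ∀ z ∈ primitiveRoots (h * m) ℂ, z ^ h ∈ primitiveRoots m ℂ := fun z hz =>
    (mem_primitiveRoots hm).2 (((mem_primitiveRoots hpos).1 hz).pow hpos rfl)
  unfold ram
  simp only [_root_.zpow_mul, zpow_natCast]
  rw [← Finset.sum_fiberwise_of_maps_to' hmaps (· ^ t), Finset.mul_sum]
  refine Finset.sum_congr rfl fun w hw => ?_
  rw [Finset.sum_const, card_primitiveRoots_filter_pow_eq hpos hsub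
    ((mem_primitiveRoots hm).1 hw), nsmul_eq_mul]

/-- With `h = n / rad n`, for every integer `t` one has
`c_n(h * t) = h * c_{rad n}(t)`. -/
theorem ram_mul_eq (n : ℕ) (hn : 0 < n) (t : ℤ) :
    ram n (((n / rad n : ℕ) : ℤ) * t) = ((n / rad n : ℕ) : ℂ) * ram (rad n) t := by
  have hn_eq : n / rad n * rad n = n := Nat.div_mul_cancel (rad_dvd n)
  have hsub : (n / rad n * rad n).primeFactors ⊆ (rad n).primeFactors := by
    rw [hn_eq, primeFactors_rad]
  have key := ram_mul_of_primeFactors_subset (by rwa [hn_eq]) hsub t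
  rwa [hn_eq] at key
end

section
/- For every positive integer n, Tr(G_n^{−1}) = Tr(G_{rad(n)}^{−1}); that is, the trace of the inverse Gram matrix is unchanged upon replacing n by its radical. -/
open Matrix Polynomial BigOperators

/-!
The Gram matrix of the Vandermonde matrix on the primitive `n`-th roots of unity is the Toeplitz
matrix of Ramanujan sums, `G_n j k = c_n (k - j)`. If `n = r d` and `r` has the same prime factors
as `n`, the primitive `n`-th roots are the `w ^ (b + r c)` with `b < r` coprime to `r` and `c < d`,
so summing over `c` is a geometric sum of a `d`-th root of unity: `c_n t = d c_r (t / d)` if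
`d ∣ t` and `0` otherwise. Ordering the indices of `G_n` as `s + d j` with `s < d` therefore turns
it into the Kronecker product `G_r ⊗ (d • 1)`, whose inverse has trace `Tr(G_r⁻¹) · d · d⁻¹`.
-/

open Finset

theorem Nat.coprime_iff_of_primeFactors_eq {m n : ℕ} (hm : m ≠ 0) (hn : n ≠ 0)
    (h : m.primeFactors = n.primeFactors) (a : ℕ) : m.Coprime a ↔ n.Coprime a := by
  rcases eq_or_ne a 0 with rfl | ha
  · have h_one : ∀ k ≠ 0, k = 1 ↔ k.primeFactors = ∅ := fun k hk => by
      simp [Nat.primeFactors_eq_empty, hk]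
    simp only [Nat.coprime_zero_right, h_one m hm, h_one n hn, h]
  · rw [← Nat.disjoint_primeFactors hm ha, ← Nat.disjoint_primeFactors hn ha, h]

theorem Nat.totient_eq_totient_mul_of_primeFactors_eq {n r d : ℕ} (hn : n = r * d)
    (h : n.primeFactors = r.primeFactors) : n.totient = r.totient * d := by
  have hP : 0 < ∏ p ∈ r.primeFactors, p :=
    Finset.prod_pos fun p hp => (Nat.prime_of_mem_primeFactors hp).pos
  have hn' := Nat.totient_mul_prod_primeFactors n
  have hr' := Nat.totient_mul_prod_primeFactors r
  rw [h] at hn'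
  apply Nat.eq_of_mul_eq_mul_right hP
  rw [hn', hn, mul_right_comm, ← hr', mul_right_comm]

theorem Finset.sum_range_mul_eq_sum_sum {M : Type*} [AddCommMonoid M] (f : ℕ → M) (m n : ℕ) :
    ∑ a ∈ range (m * n), f a = ∑ i ∈ range m, ∑ j ∈ range n, f (i + m * j) := by
  rw [mul_comm, ← Fin.sum_univ_eq_sum_range, ← finProdFinEquiv.sum_comp, Fintype.sum_prod_type,
    Finset.sum_comm]
  simp only [finProdFinEquiv_apply_val]
  rw [Fin.sum_univ_eq_sum_range (fun i => ∑ j : Fin n, f (i + m * j)) m]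
  exact sum_congr rfl fun i _ => Fin.sum_univ_eq_sum_range (fun j => f (i + m * j)) n

theorem pow_zpow_comm {G₀ : Type*} [GroupWithZero G₀] (a : G₀) (m : ℕ) (n : ℤ) :
    (a ^ m) ^ n = (a ^ n) ^ m := by
  rw [← zpow_natCast, ← zpow_natCast, ← _root_.zpow_mul, ← _root_.zpow_mul, mul_comm]

theorem geom_sum_eq_ite_of_pow_eq_one {K : Type*} [Field K] [DecidableEq K] {u : K} {d : ℕ}
    (hu : u ^ d = 1) : ∑ c ∈ range d, u ^ c = if u = 1 then (d : K) else 0 := by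
  split_ifs with h
  · simp [h]
  · rw [geom_sum_eq h, hu, sub_self, zero_div]

theorem IsPrimitiveRoot.sum_primitiveRoots_eq_sum_coprime {R M : Type*} [CommRing R] [IsDomain R]
    [AddCommMonoid M] {w : R} {n : ℕ} (hw : IsPrimitiveRoot w n) (f : R → M) :
    ∑ z ∈ primitiveRoots n R, f z = ∑ a ∈ range n with n.Coprime a, f (w ^ a) := by
  classical
  rcases n.eq_zero_or_pos with rfl | hn
  · simp
  have hinj : Set.InjOn (w ^ ·) ({a ∈ range n | n.Coprime a} : Finset ℕ) := fun a ha b hb hab =>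
    hw.pow_inj (mem_range.mp (mem_filter.mp ha).1) (mem_range.mp (mem_filter.mp hb).1) hab
  have himage : {a ∈ range n | n.Coprime a}.image (w ^ ·) = primitiveRoots n R := by
    refine eq_of_subset_of_card_le (fun z hz => ?_) ?_
    · obtain ⟨a, ha, rfl⟩ := mem_image.mp hz
      exact (mem_primitiveRoots hn).mpr (hw.pow_of_coprime a (mem_filter.mp ha).2.symm)
    · rw [hw.card_primitiveRoots, card_image_of_injOn hinj, Nat.totient]
  rw [← himage, sum_image hinj]

theorem ram_eq_sum_coprime {n : ℕ} {w : ℂ} (hw : IsPrimitiveRoot w n) (t : ℤ) :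
    ram n t = ∑ a ∈ range n with n.Coprime a, (w ^ t) ^ a := by
  rw [ram, hw.sum_primitiveRoots_eq_sum_coprime]
  exact sum_congr rfl fun a _ => pow_zpow_comm w a t

theorem ram_mul_of_primeFactors_eq {r d : ℕ} (hrd : r * d ≠ 0)
    (h : (r * d).primeFactors = r.primeFactors) (t : ℤ) :
    ram (r * d) t = if (d : ℤ) ∣ t then d * ram r (t / d) else 0 := by
  obtain ⟨w, hw⟩ : ∃ w : ℂ, IsPrimitiveRoot w (r * d) :=
    ⟨_, Complex.isPrimitiveRoot_exp _ hrd⟩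
  have hcop : ∀ b c, (r * d).Coprime (b + r * c) ↔ r.Coprime b := fun b c => by
    rw [Nat.coprime_iff_of_primeFactors_eq hrd (left_ne_zero_of_mul hrd) h,
      Nat.coprime_add_mul_left_right]
  have hsplit : ram (r * d) t =
      (∑ b ∈ range r with r.Coprime b, (w ^ t) ^ b) * ∑ c ∈ range d, ((w ^ t) ^ r) ^ c := by
    rw [ram_eq_sum_coprime hw, sum_filter, sum_range_mul_eq_sum_sum, sum_filter, sum_mul]
    refine sum_congr rfl fun b _ => ?_
    rw [mul_sum]
    refine sum_congr rfl fun c _ => ?_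
    simp only [hcop, pow_add, pow_mul, ite_mul, zero_mul]
  have hroot : IsPrimitiveRoot (w ^ r) d := hw.pow (Nat.pos_of_ne_zero hrd) rfl
  have hgeom : ∑ c ∈ range d, ((w ^ t) ^ r) ^ c = if (d : ℤ) ∣ t then (d : ℂ) else 0 := by
    rw [geom_sum_eq_ite_of_pow_eq_one, ← pow_zpow_comm]
    · exact if_congr (hroot.zpow_eq_one_iff_dvd t) rfl rfl
    · rw [← pow_mul, ← pow_zpow_comm, hw.pow_eq_one, _root_.one_zpow]
  rw [hsplit, hgeom]
  split_ifs with hdt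
  · obtain ⟨s, rfl⟩ := hdt
    have hd : (d : ℤ) ≠ 0 := by exact_mod_cast right_ne_zero_of_mul hrd
    rw [Int.mul_ediv_cancel_left s hd, _root_.zpow_mul, zpow_natCast, mul_comm,
      ram_eq_sum_coprime (hw.pow (Nat.pos_of_ne_zero hrd) (mul_comm r d))]
  · rw [mul_zero]

theorem Fin.natCast_dvd_sub_iff_eq {d : ℕ} (s t : Fin d) : (d : ℤ) ∣ (t : ℤ) - s ↔ s = t := by
  rw [← Nat.modEq_iff_dvd, Fin.ext_iff]
  exact ⟨fun h => h.eq_of_lt_of_lt s.2 t.2, fun h => h ▸ rfl⟩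

theorem ram_mul_add_mul_sub_add_mul {r d : ℕ} (hrd : r * d ≠ 0)
    (h : (r * d).primeFactors = r.primeFactors) (j k : ℤ) (s t : Fin d) :
    ram (r * d) ((t + d * k) - (s + d * j)) = if s = t then d * ram r (k - j) else 0 := by
  have hd : (d : ℤ) ≠ 0 := by exact_mod_cast right_ne_zero_of_mul hrd
  rw [ram_mul_of_primeFactors_eq hrd h, show (t + d * k) - (s + d * j) = d * (k - j) + (t - s) by
    ring]
  refine if_ctx_congr ?_ (fun hst => ?_) fun _ => rfl
  · rw [dvd_add_right (dvd_mul_right _ _), Fin.natCast_dvd_sub_iff_eq]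
  · rw [hst, sub_self, add_zero, Int.mul_ediv_cancel_left _ hd]

theorem conjTranspose_vand_mul_vand_apply {m : ℕ} {ζ : Fin m → ℂ} (hζ : ∀ i, ‖ζ i‖ = 1)
    (j k : Fin m) : ((vand ζ)ᴴ * vand ζ) j k = ∑ i, ζ i ^ ((k : ℤ) - j) := by
  rw [mul_apply]
  refine sum_congr rfl fun i _ => ?_
  have hζ0 : ζ i ≠ 0 := norm_ne_zero_iff.mp ((hζ i).symm ▸ one_ne_zero)
  rw [conjTranspose_apply, vand, of_apply, of_apply, star_pow,
    show star (ζ i) = (ζ i)⁻¹ from (Complex.inv_eq_conj (hζ i)).symm,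
    inv_pow, ← zpow_natCast, ← zpow_natCast, ← _root_.zpow_neg, ← zpow_add₀ hζ0, neg_add_eq_sub]

theorem sum_comp_eq_sum_primitiveRoots {M : Type*} [AddCommMonoid M] {n : ℕ} (hn : 0 < n)
    {ζ : Fin n.totient → ℂ} (hinj : Function.Injective ζ) (hζ : ∀ i, IsPrimitiveRoot (ζ i) n)
    (f : ℂ → M) : ∑ i, f (ζ i) = ∑ z ∈ primitiveRoots n ℂ, f z := by
  have himage : univ.image ζ = primitiveRoots n ℂ := by
    refine eq_of_subset_of_card_le (fun z hz => ?_) ?_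
    · obtain ⟨i, _, rfl⟩ := mem_image.mp hz
      exact (mem_primitiveRoots hn).mpr (hζ i)
    · rw [Complex.card_primitiveRoots, card_image_of_injective _ hinj, card_univ,
        Fintype.card_fin]
  rw [← himage, sum_image fun a _ b _ h => hinj h]

theorem conjTranspose_vand_mul_vand_apply_eq_ram {n : ℕ} (hn : 0 < n)
    {ζ : Fin n.totient → ℂ} (hinj : Function.Injective ζ) (hζ : ∀ i, IsPrimitiveRoot (ζ i) n)
    (j k : Fin n.totient) : ((vand ζ)ᴴ * vand ζ) j k = ram n ((k : ℤ) - j) := by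
  rw [conjTranspose_vand_mul_vand_apply fun i => (hζ i).norm'_eq_one hn.ne',
    sum_comp_eq_sum_primitiveRoots hn hinj hζ fun z => z ^ ((k : ℤ) - j), ram]

open scoped Kronecker in
theorem conjTranspose_vand_mul_vand_submatrix_eq_kronecker {n r d : ℕ} (hn : 0 < n)
    (hnrd : n = r * d) (hPF : n.primeFactors = r.primeFactors) (htot : r.totient * d = n.totient)
    {ζ : Fin n.totient → ℂ} (hζinj : Function.Injective ζ) (hζ : ∀ i, IsPrimitiveRoot (ζ i) n)
    {ξ : Fin r.totient → ℂ} (hξinj : Function.Injective ξ) (hξ : ∀ i, IsPrimitiveRoot (ξ i) r) :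
    ((vand ζ)ᴴ * vand ζ).submatrix (finProdFinEquiv.trans (finCongr htot))
        (finProdFinEquiv.trans (finCongr htot)) =
      ((vand ξ)ᴴ * vand ξ) ⊗ₖ ((d : ℂ) • (1 : Matrix (Fin d) (Fin d) ℂ)) := by
  have hr : 0 < r := Nat.pos_of_mul_pos_right (hnrd ▸ hn)
  ext ⟨j, s⟩ ⟨k, t⟩
  rw [submatrix_apply, conjTranspose_vand_mul_vand_apply_eq_ram hn hζinj hζ, kronecker_apply,
    conjTranspose_vand_mul_vand_apply_eq_ram hr hξinj hξ, Matrix.smul_apply, one_apply]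
  simp only [Equiv.trans_apply, finCongr_apply, Fin.val_cast, finProdFinEquiv_apply_val]
  push_cast
  subst hnrd
  rw [ram_mul_add_mul_sub_add_mul hn.ne' hPF]
  split_ifs <;> simp only [smul_eq_mul, mul_one, mul_zero, mul_comm]

theorem Matrix.trace_submatrix_equiv {m n R : Type*} [Fintype m] [Fintype n] [AddCommMonoid R]
    (A : Matrix m m R) (e : n ≃ m) : (A.submatrix e e).trace = A.trace :=
  e.sum_comp fun i => A i i

open scoped Kronecker in
theorem Matrix.trace_inv_kronecker_smul_one {K m : Type*} [Field K] [Fintype m] [DecidableEq m]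
    (A : Matrix m m K) {d : ℕ} (hd : (d : K) ≠ 0) :
    trace ((A ⊗ₖ ((d : K) • (1 : Matrix (Fin d) (Fin d) K)))⁻¹) = trace A⁻¹ := by
  have hinv : ((d : K) • (1 : Matrix (Fin d) (Fin d) K))⁻¹ = (d : K)⁻¹ • 1 :=
    inv_eq_left_inv (by rw [smul_mul_smul_comm, inv_mul_cancel₀ hd, one_mul, one_smul])
  rw [inv_kronecker, trace_kronecker, hinv, trace_smul, trace_one, Fintype.card_fin, smul_eq_mul,
    inv_mul_cancel₀ hd, mul_one]

theorem trace_inv_gram_vand_eq_of_primeFactors_eq {n r : ℕ} (hn : 0 < n) (hrn : r ∣ n)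
    (hPF : n.primeFactors = r.primeFactors)
    {ζ : Fin n.totient → ℂ} (hζinj : Function.Injective ζ) (hζ : ∀ i, IsPrimitiveRoot (ζ i) n)
    {ξ : Fin r.totient → ℂ} (hξinj : Function.Injective ξ) (hξ : ∀ i, IsPrimitiveRoot (ξ i) r) :
    trace (((vand ζ)ᴴ * vand ζ)⁻¹) = trace (((vand ξ)ᴴ * vand ξ)⁻¹) := by
  obtain ⟨d, hnrd⟩ := hrn
  have htot : r.totient * d = n.totient :=
    (Nat.totient_eq_totient_mul_of_primeFactors_eq hnrd hPF).symm
  have hd : (d : ℂ) ≠ 0 := Nat.cast_ne_zero.mpr (right_ne_zero_of_mul (hnrd ▸ hn.ne'))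
  rw [← trace_submatrix_equiv _ (finProdFinEquiv.trans (finCongr htot)), ← inv_submatrix_equiv,
    conjTranspose_vand_mul_vand_submatrix_eq_kronecker hn hnrd hPF htot hζinj hζ hξinj hξ,
    trace_inv_kronecker_smul_one _ hd]

/-- For every positive integer `n`, `Tr(G_n⁻¹) = Tr(G_{rad n}⁻¹)`. -/
theorem trace_inv_gram_eq_trace_inv_gram_rad (n : ℕ) (hn : 0 < n)
    (ζ : Fin n.totient → ℂ) (hζinj : Function.Injective ζ)
    (hζ : ∀ i, IsPrimitiveRoot (ζ i) n)
    (ξ : Fin (rad n).totient → ℂ) (hξinj : Function.Injective ξ)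
    (hξ : ∀ i, IsPrimitiveRoot (ξ i) (rad n)) :
    Matrix.trace (((vand ζ)ᴴ * vand ζ)⁻¹) = Matrix.trace (((vand ξ)ᴴ * vand ξ)⁻¹) :=
  trace_inv_gram_vand_eq_of_primeFactors_eq hn (Nat.prod_primeFactors_dvd n)
    (Nat.primeFactors_prod_primeFactors n).symm hζinj hζ hξinj hξ
end
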